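/- arXiv:1306.4088 — 2 statements merged into one kernel-verified Lean document; each statement's English description precedes it below -/
import Mathlib

section
/- Let R and S be rings, U an (S,R)-bimodule, and write (-)* = Hom(-,U). Let C be a class of left S-modules and D a class of right R-modules such that X* ∈ D for every X ∈ C, and such that the canonical evaluation map σ_X : X → X** is a split monomorphism for every X ∈ C. If f : A → C is a homomorphism of left S-modules with C ∈ C, and f* : C* → A* is a D-precover of A* (i.e., every map from an object of D to A* factors through f*), then f is a C-preenvelope of A (i.e., every map from A to an object of C factors through f). -/
/-!
Write `g : A → X` with `X ∈ 𝒞`. Since `X* ∈ 𝒟`, the precover property gives `g* = f* ∘ h` for some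
`h : X* → C*`. Dualising once more and using naturality of `σ`, `h* ∘ σ_C ∘ f = σ_X ∘ g`, so a
retraction `α` of `σ_X` yields the factorisation `g = (α ∘ h* ∘ σ_C) ∘ f`.
-/

universe u

section Bimodule

variable (S R : Type u) [Ring S] [Ring R] (U : Type u) [AddCommGroup U] [Module S U]
  [Module Rᵐᵒᵖ U] [SMulCommClass S Rᵐᵒᵖ U] [SMulCommClass Rᵐᵒᵖ S U]

/-- The canonical evaluation map `σ_X : X → X** = Hom(Hom(X,U),U)` for a left `S`-module `X`,
where `U` is an `(S,R)`-bimodule. -/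
def biEval (X : Type u) [AddCommGroup X] [Module S X] :
    X →ₗ[S] ((X →ₗ[S] U) →ₗ[Rᵐᵒᵖ] U) where
  toFun x :=
    { toFun := fun φ => φ x
      map_add' := fun _ _ => rfl
      map_smul' := fun _ _ => rfl }
  map_add' x y := LinearMap.ext fun φ => φ.map_add x y
  map_smul' s x := LinearMap.ext fun φ => φ.map_smul s x

variable {S R U}

/-- The dual `f* : C* → A*` of a map `f : A → C` of left `S`-modules. -/
def dualStar {A C : Type u} [AddCommGroup A] [Module S A] [AddCommGroup C] [Module S C]
    (f : A →ₗ[S] C) : (C →ₗ[S] U) →ₗ[Rᵐᵒᵖ] (A →ₗ[S] U) where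
  toFun φ := φ.comp f
  map_add' _ _ := rfl
  map_smul' _ _ := rfl

/-- The dual `h* : Y'* → Y*` of a map `h : Y → Y'` of right `R`-modules. -/
def dualStarOp {Y Y' : Type u} [AddCommGroup Y] [Module Rᵐᵒᵖ Y] [AddCommGroup Y']
    [Module Rᵐᵒᵖ Y'] (h : Y →ₗ[Rᵐᵒᵖ] Y') : (Y' →ₗ[Rᵐᵒᵖ] U) →ₗ[S] (Y →ₗ[Rᵐᵒᵖ] U) where
  toFun ψ := ψ.comp h
  map_add' _ _ := rfl
  map_smul' _ _ := rfl

end Bimodule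

section Naturality

variable {S R U : Type u} [Ring S] [Ring R] [AddCommGroup U] [Module S U]
  [Module Rᵐᵒᵖ U] [SMulCommClass S Rᵐᵒᵖ U] [SMulCommClass Rᵐᵒᵖ S U]
  {A C X : Type u} [AddCommGroup A] [Module S A] [AddCommGroup C] [Module S C]
  [AddCommGroup X] [Module S X]

theorem dualStarOp_comp_biEval_comp {f : A →ₗ[S] C} {g : A →ₗ[S] X}
    {h : (X →ₗ[S] U) →ₗ[Rᵐᵒᵖ] (C →ₗ[S] U)} (hh : (dualStar f).comp h = dualStar g) :
    (dualStarOp h).comp ((biEval S R U C).comp f) = (biEval S R U X).comp g := by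
  ext a ψ
  exact LinearMap.congr_fun (LinearMap.congr_fun hh ψ) a

theorem comp_eq_of_dualStar_comp_eq {f : A →ₗ[S] C} {g : A →ₗ[S] X}
    {α : ((X →ₗ[S] U) →ₗ[Rᵐᵒᵖ] U) →ₗ[S] X} (hα : α.comp (biEval S R U X) = LinearMap.id)
    {h : (X →ₗ[S] U) →ₗ[Rᵐᵒᵖ] (C →ₗ[S] U)} (hh : (dualStar f).comp h = dualStar g) :
    (α.comp ((dualStarOp h).comp (biEval S R U C))).comp f = g := by
  calc (α.comp ((dualStarOp h).comp (biEval S R U C))).comp f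
      = α.comp ((dualStarOp h).comp ((biEval S R U C).comp f)) := rfl
    _ = (α.comp (biEval S R U X)).comp g := by rw [dualStarOp_comp_biEval_comp hh]; rfl
    _ = g := by rw [hα, LinearMap.id_comp]

end Naturality

theorem stmt0_general {S R U : Type u} [Ring S] [Ring R] [AddCommGroup U] [Module S U]
    [Module Rᵐᵒᵖ U] [SMulCommClass S Rᵐᵒᵖ U] [SMulCommClass Rᵐᵒᵖ S U]
    {A C : Type u} [AddCommGroup A] [Module S A] [AddCommGroup C] [Module S C]
    (𝒞 : ∀ (X : Type u) [AddCommGroup X] [Module S X], Prop)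
    (𝒟 : ∀ (Y : Type u) [AddCommGroup Y] [Module Rᵐᵒᵖ Y], Prop)
    (hCD : ∀ (X : Type u) [AddCommGroup X] [Module S X], 𝒞 X → 𝒟 (X →ₗ[S] U))
    (hsplit : ∀ (X : Type u) [AddCommGroup X] [Module S X], 𝒞 X →
      ∃ α : ((X →ₗ[S] U) →ₗ[Rᵐᵒᵖ] U) →ₗ[S] X, α.comp (biEval S R U X) = LinearMap.id)
    (f : A →ₗ[S] C)
    -- `f* : C* → A*` is a `𝒟`-precover of `A*`:
    (hfact : ∀ (Y : Type u) [AddCommGroup Y] [Module Rᵐᵒᵖ Y], 𝒟 Y →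
      ∀ g : Y →ₗ[Rᵐᵒᵖ] (A →ₗ[S] U), ∃ h : Y →ₗ[Rᵐᵒᵖ] (C →ₗ[S] U),
        (dualStar (U := U) f).comp h = g) :
    -- `f` is a `𝒞`-preenvelope of `A`:
    ∀ (X : Type u) [AddCommGroup X] [Module S X], 𝒞 X →
      ∀ g : A →ₗ[S] X, ∃ h : C →ₗ[S] X, h.comp f = g := by
  intro X _ _ hX g
  obtain ⟨α, hα⟩ := hsplit X hX
  obtain ⟨h, hh⟩ := hfact (X →ₗ[S] U) (hCD X hX) (dualStar g)
  exact ⟨_, comp_eq_of_dualStar_comp_eq hα hh⟩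

/-- **Lemma 3.1.** Let `U` be an `(S,R)`-bimodule and `(-)* = Hom(-,U)`. Let `𝒞` be a class of
left `S`-modules and `𝒟` a class of right `R`-modules with `𝒞* ⊆ 𝒟`, such that `σ_X : X → X**`
is a split monomorphism for every `X ∈ 𝒞`. If `f : A → C` with `C ∈ 𝒞` is such that
`f* : C* → A*` is a `𝒟`-precover of `A*`, then `f` is a `𝒞`-preenvelope of `A`. -/
theorem stmt0 {S R U : Type u} [Ring S] [Ring R] [AddCommGroup U] [Module S U]
    [Module Rᵐᵒᵖ U] [SMulCommClass S Rᵐᵒᵖ U] [SMulCommClass Rᵐᵒᵖ S U]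
    {A C : Type u} [AddCommGroup A] [Module S A] [AddCommGroup C] [Module S C]
    (𝒞 : ∀ (X : Type u) [AddCommGroup X] [Module S X], Prop)
    (𝒟 : ∀ (Y : Type u) [AddCommGroup Y] [Module Rᵐᵒᵖ Y], Prop)
    (hCD : ∀ (X : Type u) [AddCommGroup X] [Module S X], 𝒞 X → 𝒟 (X →ₗ[S] U))
    (hsplit : ∀ (X : Type u) [AddCommGroup X] [Module S X], 𝒞 X →
      ∃ α : ((X →ₗ[S] U) →ₗ[Rᵐᵒᵖ] U) →ₗ[S] X, α.comp (biEval S R U X) = LinearMap.id)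
    (hC : 𝒞 C) (f : A →ₗ[S] C)
    -- `f* : C* → A*` is a `𝒟`-precover of `A*`:
    (hdom : 𝒟 (C →ₗ[S] U))
    (hfact : ∀ (Y : Type u) [AddCommGroup Y] [Module Rᵐᵒᵖ Y], 𝒟 Y →
      ∀ g : Y →ₗ[Rᵐᵒᵖ] (A →ₗ[S] U), ∃ h : Y →ₗ[Rᵐᵒᵖ] (C →ₗ[S] U),
        (dualStar (U := U) f).comp h = g) :
    -- `f` is a `𝒞`-preenvelope of `A`:
    ∀ (X : Type u) [AddCommGroup X] [Module S X], 𝒞 X →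
      ∀ g : A →ₗ[S] X, ∃ h : C →ₗ[S] X, h.comp f = g :=
  stmt0_general 𝒞 𝒟 hCD hsplit f hfact
end

section
/- Let R be a ring and let f : A → C be a homomorphism of left R-modules. If f is a C-preenvelope of A for a class C of left R-modules, and D is a class of right R-modules with C^+ ⊆ D and D^+ ⊆ C, then f^+ : C^+ → A^+ is a D-precover of A^+. -/
universe u

/-! Common definitions: character modules, purity, pure injectivity. -/

open MulOpposite


/-- The character group `M⁺ = Hom_ℤ(M, ℚ/ℤ)`. -/
def CharMod (M : Type u) [AddCommGroup M] : Type u := M →+ AddCircle (1 : ℚ)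

instance (M : Type u) [AddCommGroup M] : AddCommGroup (CharMod M) :=
  inferInstanceAs (AddCommGroup (M →+ AddCircle (1 : ℚ)))

instance (M : Type u) [AddCommGroup M] : FunLike (CharMod M) M (AddCircle (1 : ℚ)) :=
  inferInstanceAs (FunLike (M →+ AddCircle (1 : ℚ)) M (AddCircle (1 : ℚ)))

instance (M : Type u) [AddCommGroup M] :
    AddMonoidHomClass (CharMod M) M (AddCircle (1 : ℚ)) :=
  inferInstanceAs (AddMonoidHomClass (M →+ AddCircle (1 : ℚ)) M (AddCircle (1 : ℚ)))

/-- If `M` is a left `R`-module, `M⁺` is a right `R`-module via `(c • r) m = c (r • m)`. -/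
instance CharMod.moduleOp (R : Type v) [Ring R] (M : Type u) [AddCommGroup M] [Module R M] :
    Module Rᵐᵒᵖ (CharMod M) where
  smul r c := (c : M →+ AddCircle (1 : ℚ)).comp (DistribMulAction.toAddMonoidHom M r.unop)
  one_smul c := AddMonoidHom.ext fun m => congrArg c (one_smul R m)
  mul_smul r s c := AddMonoidHom.ext fun m => congrArg c (mul_smul s.unop r.unop m)
  smul_zero r := rfl
  smul_add r c d := rfl
  add_smul r s c := AddMonoidHom.ext fun m => by
    show c ((r.unop + s.unop) • m) = c (r.unop • m) + c (s.unop • m)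
    rw [add_smul, map_add]
  zero_smul c := AddMonoidHom.ext fun m => by
    show c ((0 : R) • m) = 0
    rw [zero_smul, map_zero]

@[simp] lemma CharMod.op_smul_apply {R : Type v} [Ring R] {M : Type u} [AddCommGroup M]
    [Module R M] (r : Rᵐᵒᵖ) (c : CharMod M) (m : M) : (r • c) m = c (r.unop • m) := rfl

/-- If `N` is a right `R`-module, `N⁺` is a left `R`-module via `(r • c) n = c (n • r)`. -/
instance CharMod.moduleUnop (R : Type v) [Ring R] (N : Type u) [AddCommGroup N] [Module Rᵐᵒᵖ N] :
    Module R (CharMod N) where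
  smul r c := (c : N →+ AddCircle (1 : ℚ)).comp (DistribMulAction.toAddMonoidHom N (op r))
  one_smul c := AddMonoidHom.ext fun n => congrArg c (one_smul Rᵐᵒᵖ n)
  mul_smul r s c := AddMonoidHom.ext fun n => by
    show c ((op (r * s)) • n) = c (op s • op r • n)
    rw [← mul_smul]; rfl
  smul_zero r := rfl
  smul_add r c d := rfl
  add_smul r s c := AddMonoidHom.ext fun n => by
    show c ((op (r + s)) • n) = c (op r • n) + c (op s • n)
    rw [show op (r + s) = op r + op s from rfl, add_smul, map_add]
  zero_smul c := AddMonoidHom.ext fun n => by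
    show c ((op (0 : R)) • n) = 0
    rw [show op (0 : R) = (0 : Rᵐᵒᵖ) from rfl, zero_smul, map_zero]

@[simp] lemma CharMod.unop_smul_apply {R : Type v} [Ring R] {N : Type u} [AddCommGroup N]
    [Module Rᵐᵒᵖ N] (r : R) (c : CharMod N) (n : N) : (r • c) n = c (op r • n) := rfl

/-- The dual `f⁺ : C⁺ → A⁺` of a map `f : A → C` of left `R`-modules. -/
def charDual {R : Type v} [Ring R] {A C : Type u} [AddCommGroup A] [Module R A]
    [AddCommGroup C] [Module R C] (f : A →ₗ[R] C) : CharMod C →ₗ[Rᵐᵒᵖ] CharMod A where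
  toFun c := (c : C →+ AddCircle (1 : ℚ)).comp f.toAddMonoidHom
  map_add' _ _ := rfl
  map_smul' r c := AddMonoidHom.ext fun a => (congrArg c (f.map_smul r.unop a)).symm

/-- The canonical evaluation map `σ_M : M → M⁺⁺`. -/
def charEval (R : Type v) [Ring R] (M : Type u) [AddCommGroup M] [Module R M] :
    M →ₗ[R] CharMod (CharMod M) where
  toFun m :=
    { toFun := fun c => c m
      map_zero' := rfl
      map_add' := fun _ _ => rfl }
  map_add' m m' := AddMonoidHom.ext fun c => c.map_add m m'
  map_smul' r m := AddMonoidHom.ext fun c => rfl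

/-- A linear map `i : M → N` is a pure monomorphism if it is injective and every
map from a finitely presented module to `N ⧸ im i` lifts to `N`, i.e. the short exact
sequence `0 → M → N → N ⧸ im i → 0` remains exact after applying `Hom(F, -)` for all
finitely presented `F`. -/
def IsPureMono {R : Type v} [Ring R] {M N : Type u} [AddCommGroup M] [Module R M]
    [AddCommGroup N] [Module R N] (i : M →ₗ[R] N) : Prop :=
  Function.Injective i ∧
    ∀ (F : Type u) [AddCommGroup F] [Module R F], Module.FinitePresentation R F →
      ∀ g : F →ₗ[R] (N ⧸ LinearMap.range i),
        ∃ h : F →ₗ[R] N, (LinearMap.range i).mkQ.comp h = g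

/-- A module `E` is pure injective if every map to `E` extends along pure monomorphisms. -/
def IsPureInjective (R : Type v) [Ring R] (E : Type u) [AddCommGroup E] [Module R E] : Prop :=
  ∀ (M N : Type u) [AddCommGroup M] [Module R M] [AddCommGroup N] [Module R N]
    (i : M →ₗ[R] N), IsPureMono i →
      ∀ f : M →ₗ[R] E, ∃ g : N →ₗ[R] E, g.comp i = f

universe v

section CharHom

variable {R : Type v} [Ring R] {A C : Type u} [AddCommGroup A] [Module R A]
  [AddCommGroup C] [Module R C] {Y : Type u} [AddCommGroup Y] [Module Rᵐᵒᵖ Y]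

/-- The adjunction `Hom_{Rᵐᵒᵖ}(Y, A⁺) ≃ Hom_R(A, Y⁺)`: both sides are the `R`-balanced
pairings `Y × A → ℚ/ℤ`, i.e. `(Y ⊗_R A)⁺`. -/
def charHomEquiv : (Y →ₗ[Rᵐᵒᵖ] CharMod A) ≃ (A →ₗ[R] CharMod Y) where
  toFun g :=
    { toFun := fun a => AddMonoidHom.mk' (fun y => g y a) fun y y' => by rw [map_add]; rfl
      map_add' := fun a a' => AddMonoidHom.ext fun y => map_add (g y) a a'
      map_smul' := fun r a => AddMonoidHom.ext fun y => by
        show g y (r • a) = g (op r • y) a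
        rw [g.map_smul]; rfl }
  invFun k :=
    { toFun := fun y => AddMonoidHom.mk' (fun a => k a y) fun a a' => by rw [map_add]; rfl
      map_add' := fun y y' => AddMonoidHom.ext fun a => map_add (k a) y y'
      map_smul' := fun r y => AddMonoidHom.ext fun a => by
        show k a (r • y) = k (r.unop • a) y
        rw [k.map_smul]; rfl }
  left_inv _ := rfl
  right_inv _ := rfl

lemma charDual_comp_charHomEquiv_symm (f : A →ₗ[R] C) (k : C →ₗ[R] CharMod Y) :
    (charDual f).comp (charHomEquiv.symm k) = charHomEquiv.symm (k.comp f) :=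
  rfl

lemma exists_charDual_comp_eq (f : A →ₗ[R] C)
    (hf : ∀ g : A →ₗ[R] CharMod Y, ∃ h : C →ₗ[R] CharMod Y, h.comp f = g)
    (g : Y →ₗ[Rᵐᵒᵖ] CharMod A) : ∃ h : Y →ₗ[Rᵐᵒᵖ] CharMod C, (charDual f).comp h = g := by
  obtain ⟨k, hk⟩ := hf (charHomEquiv g)
  exact ⟨charHomEquiv.symm k, by rw [charDual_comp_charHomEquiv_symm, hk, Equiv.symm_apply_apply]⟩

end CharHom

/-- **Enochs–Huang (Theorem 1.1).** Let `𝒞` be a class of left `R`-modules and `𝒟` a class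
of right `R`-modules with `𝒞⁺ ⊆ 𝒟` and `𝒟⁺ ⊆ 𝒞`. If `f : A → C` is a `𝒞`-preenvelope of
`A`, then `f⁺ : C⁺ → A⁺` is a `𝒟`-precover of `A⁺`. -/
theorem stmt12 {R : Type u} [Ring R] {A C : Type u}
    [AddCommGroup A] [Module R A] [AddCommGroup C] [Module R C]
    (𝒞 : ∀ (X : Type u) [AddCommGroup X] [Module R X], Prop)
    (𝒟 : ∀ (Y : Type u) [AddCommGroup Y] [Module Rᵐᵒᵖ Y], Prop)
    (hCD : ∀ (X : Type u) [AddCommGroup X] [Module R X], 𝒞 X → 𝒟 (CharMod X))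
    (hDC : ∀ (Y : Type u) [AddCommGroup Y] [Module Rᵐᵒᵖ Y], 𝒟 Y → 𝒞 (CharMod Y))
    (hC : 𝒞 C) (f : A →ₗ[R] C)
    -- `f` is a `𝒞`-preenvelope of `A`:
    (henv : ∀ (X : Type u) [AddCommGroup X] [Module R X], 𝒞 X →
      ∀ g : A →ₗ[R] X, ∃ h : C →ₗ[R] X, h.comp f = g) :
    -- `f⁺ : C⁺ → A⁺` is a `𝒟`-precover of `A⁺`:
    𝒟 (CharMod C) ∧
      ∀ (Y : Type u) [AddCommGroup Y] [Module Rᵐᵒᵖ Y], 𝒟 Y →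
        ∀ g : Y →ₗ[Rᵐᵒᵖ] CharMod A, ∃ h : Y →ₗ[Rᵐᵒᵖ] CharMod C,
          (charDual f).comp h = g :=
  ⟨hCD C hC, fun Y _ _ hY => exists_charDual_comp_eq f (henv _ (hDC Y hY))⟩
end
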